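/- (Formal Kostov theorem) Let k ≥ 1 and let X̂ ∈ ℂ[[x,λ_1,…,λ_m]] be a formal power series whose restriction to λ = 0 equals x^{k+1}·u(x) for some u ∈ ℂ[[x]] with u(0) ≠ 0. Then there exist a formal power series φ̂ ∈ ℂ[[x,λ]] with zero constant term and with the coefficient of x in φ̂(x,0) nonzero, and formal series ŷ_0,…,ŷ_{k−1}, μ̂ ∈ ℂ[[λ]] with ŷ_j(0) = 0 for all j, such that, at the level of formal power series (substituting φ̂ for x, which is legitimate since φ̂ has zero constant term), ( φ̂^{k+1} + ŷ_{k−1}φ̂^{k−1} + ⋯ + ŷ_0 )·(1 + μ̂·φ̂^k)^{−1} = (∂φ̂/∂x)·X̂ in ℂ[[x,λ]]. -/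

import Mathlib

/-!
Write `x^{k+1} u` for the restriction of `X̂` to `λ = 0` (`restrictAxis 0`) and fix `a` with
`a^k = u(0)`. We look for `φ̂ = a x + ⋯`, `ŷ_j` and `μ̂` killing the defect
`φ̂^{k+1} + Σ ŷ_j φ̂^j - φ̂' X̂ (1 + μ̂ φ̂^k)`, and determine their coefficients one at a time.
The coefficient of `x^n λ^β` in `φ̂` enters the coefficient of `x^{n+k} λ^β` of the defect with
slope `(k + 1 - n) u(0)`, the coefficient of `λ^β` in `ŷ_j` enters that of `x^j λ^β` with slope
`a^j`, and the coefficient of `λ^β` in `μ̂` enters that of `x^{2k+1} λ^β` with slope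
`-a^{k+1} u(0)`; the resonant coefficients (`n = k + 1`) of `φ̂` are set to zero and `μ̂` takes
their place. Besides its own unknown, such a coefficient of the defect only involves unknowns
attached to monomials in a cone below it, which come earlier in the lexicographic order on
(`λ`-degree, `x`-degree); so well-founded recursion along this order solves all equations. The
remaining equations, the coefficients of `x^n` with `n ≤ k + 1`, hold because `a^k = u(0)`.
-/

open Filter Topology

/-- The formal partial derivative `∂/∂x` of a formal power series in the variables
`x = X 0, λ₁ = X 1, …, λ_m = X m`. -/
noncomputable def formalDx {m : ℕ} (f : MvPowerSeries (Fin (m + 1)) ℂ) :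
    MvPowerSeries (Fin (m + 1)) ℂ :=
  fun d => ((d 0 : ℕ) + 1 : ℂ) * MvPowerSeries.coeff (d + Finsupp.single 0 1) f

/-- A formal power series in `(x, λ)` depends only on the parameters `λ` (no `x`). -/
def noXVar {m : ℕ} (f : MvPowerSeries (Fin (m + 1)) ℂ) : Prop :=
  ∀ d : Fin (m + 1) →₀ ℕ, d 0 ≠ 0 → MvPowerSeries.coeff d f = 0

open Finsupp

namespace PowerSeries

variable {R : Type*} [CommRing R]

lemma coeff_pow_mul_pow_of_X_dvd {f g : PowerSeries R} (hf : X ∣ f) (hg : X ∣ g) (i j : ℕ) :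
    coeff (i + j) (f ^ i * g ^ j) = coeff 1 f ^ i * coeff 1 g ^ j := by
  obtain ⟨f, rfl⟩ := hf
  obtain ⟨g, rfl⟩ := hg
  have hshift := coeff_X_pow_mul (f ^ i * g ^ j) (i + j) 0
  rw [zero_add] at hshift
  rw [mul_pow, mul_pow, mul_mul_mul_comm, ← pow_add, hshift, coeff_succ_X_mul, coeff_succ_X_mul,
    coeff_zero_eq_constantCoeff_apply, map_mul, map_pow, map_pow,
    coeff_zero_eq_constantCoeff_apply, coeff_zero_eq_constantCoeff_apply]

lemma coeff_pow_of_X_dvd {f : PowerSeries R} (hf : X ∣ f) (n : ℕ) :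
    coeff n (f ^ n) = coeff 1 f ^ n := by
  simpa using coeff_pow_mul_pow_of_X_dvd hf hf n 0

lemma coeff_geom_sum₂_of_X_dvd {f g : PowerSeries R} {a : R}
    (hf : X ∣ f) (hg : X ∣ g) (hfa : coeff 1 f = a) (hga : coeff 1 g = a) (n : ℕ) :
    coeff n (∑ i ∈ Finset.range (n + 1), f ^ i * g ^ (n - i)) = (n + 1) * a ^ n := by
  have hterm : ∀ i ∈ Finset.range (n + 1), coeff n (f ^ i * g ^ (n - i)) = a ^ n := by
    intro i hi
    have hin : i + (n - i) = n := by have := Finset.mem_range.1 hi; omega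
    have := coeff_pow_mul_pow_of_X_dvd hf hg i (n - i)
    rwa [hin, hfa, hga, ← pow_add, hin] at this
  rw [map_sum, Finset.sum_congr rfl hterm, Finset.sum_const, Finset.card_range, nsmul_eq_mul]
  push_cast
  ring

end PowerSeries

namespace MvPowerSeries

variable {σ R : Type*} [CommSemiring R]

noncomputable def restrictAxis (i : σ) : MvPowerSeries σ R →+* PowerSeries R where
  toFun f := PowerSeries.mk fun n => coeff (single i n) f
  map_one' := by
    ext n
    classical
    simp [coeff_one, PowerSeries.coeff_one]
  map_mul' f g := by
    ext n
    classical
    rw [PowerSeries.coeff_mk, coeff_mul, antidiagonal_single, Finset.sum_map,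
      PowerSeries.coeff_mul]
    simp
  map_zero' := by ext; simp
  map_add' f g := by ext; simp

@[simp] theorem coeff_restrictAxis (i : σ) (f : MvPowerSeries σ R) (n : ℕ) :
    PowerSeries.coeff n (restrictAxis i f) = coeff (single i n) f :=
  PowerSeries.coeff_mk n (fun n => coeff (single i n) f)

def vanishingIdeal (S : LowerSet (σ →₀ ℕ)) : Ideal (MvPowerSeries σ R) where
  carrier := {f | ∀ d ∈ S, coeff d f = 0}
  zero_mem' := by simp
  add_mem' hf hg d hd := by rw [map_add, hf d hd, hg d hd, add_zero]
  smul_mem' c f hf d hd := by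
    classical
    rw [smul_eq_mul, coeff_mul]
    refine Finset.sum_eq_zero fun p hp => ?_
    rw [hf p.2 (S.lower ((Finset.HasAntidiagonal.mem_antidiagonal.1 hp) ▸ le_add_self) hd),
      mul_zero]

end MvPowerSeries

namespace Kostov

open MvPowerSeries

variable {m k : ℕ}

abbrev Monom (m : ℕ) := Fin (m + 1) →₀ ℕ

abbrev Series (m : ℕ) := MvPowerSeries (Fin (m + 1)) ℂ

section Cone

noncomputable def paramDeg (d : Monom m) : ℕ := degree (d.erase 0)

@[simp] lemma paramDeg_add (d e : Monom m) : paramDeg (d + e) = paramDeg d + paramDeg e := by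
  simp [paramDeg, erase_add]

@[simp] lemma paramDeg_single_zero (n : ℕ) : paramDeg (single (0 : Fin (m + 1)) n) = 0 := by
  simp [paramDeg]

lemma paramDeg_eq_zero_iff {d : Monom m} : paramDeg d = 0 ↔ d = single 0 (d 0) := by
  rw [paramDeg, degree_eq_zero_iff]
  conv_rhs => lhs; rw [← single_add_erase 0 d]
  simp

lemma coeff_eq_zero_of_X_pow_dvd {p : ℕ} {f : Series m}
    (hf : PowerSeries.X ^ p ∣ restrictAxis 0 f) {d : Monom m} (hd : paramDeg d = 0)
    (hdp : d 0 < p) : coeff d f = 0 := by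
  rw [paramDeg_eq_zero_iff.1 hd, ← coeff_restrictAxis]
  exact PowerSeries.X_pow_dvd_iff.1 hf _ hdp

def cone (e : Monom m) (r : ℕ) : LowerSet (Monom m) where
  carrier := {d | d.erase 0 ≤ e.erase 0 ∧ toLex (paramDeg d, d 0 + r) ≤ toLex (paramDeg e, e 0)}
  lower' d' d hle hd := by
    have herase : d.erase 0 ≤ d'.erase 0 := fun i => by
      by_cases hi : i = 0 <;> simp [hi, erase_ne, hle i]
    refine ⟨herase.trans hd.1, le_trans (Prod.Lex.toLex_mono ?_) hd.2⟩
    exact ⟨degree_mono herase, by simpa using hle 0⟩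

lemma mem_cone {e d : Monom m} {r : ℕ} :
    d ∈ cone e r ↔ d.erase 0 ≤ e.erase 0 ∧ toLex (paramDeg d, d 0 + r) ≤ toLex (paramDeg e, e 0) :=
  Iff.rfl

lemma self_mem_cone (e : Monom m) : e ∈ cone e 0 := ⟨le_rfl, by simp⟩

lemma add_single_mem_cone_iff {e d : Monom m} {r n : ℕ} :
    d + single 0 n ∈ cone e r ↔ d ∈ cone e (n + r) := by
  simp [mem_cone, erase_add, add_assoc]

lemma eq_of_mem_cone {d e : Monom m} (hd : d ∈ cone e 0) (hdeg : paramDeg d = paramDeg e)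
    (h0 : d 0 = e 0) : d = e := by
  obtain ⟨c, hc⟩ := exists_add_of_le hd.1
  have hc0 : c = 0 := by
    rw [paramDeg, paramDeg, hc, map_add] at hdeg
    exact (degree_eq_zero_iff c).1 (by omega)
  rw [← single_add_erase 0 d, ← single_add_erase 0 e, hc, hc0, add_zero, h0]

lemma cone_anti {e : Monom m} {r r' : ℕ} (h : r ≤ r') : cone e r' ≤ cone e r := by
  intro d ⟨h1, h2⟩
  refine ⟨h1, le_trans (Prod.Lex.toLex_mono ?_) h2⟩
  exact Prod.mk_le_mk.2 ⟨le_rfl, Nat.add_le_add_left h _⟩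

lemma vanishingIdeal_cone_mono {e : Monom m} {r r' : ℕ} (h : r ≤ r') :
    vanishingIdeal (cone e r) ≤ (vanishingIdeal (cone e r') : Ideal (Series m)) :=
  fun _ hf d hd => hf d (cone_anti h hd)

lemma mul_mem_vanishingIdeal_cone {e : Monom m} {r p : ℕ} {f g : Series m}
    (hf : f ∈ vanishingIdeal (cone e r)) (hg : PowerSeries.X ^ p ∣ restrictAxis 0 g) :
    f * g ∈ vanishingIdeal (cone e (r - p)) := by
  intro d hd
  rw [coeff_mul]
  refine Finset.sum_eq_zero fun q hq => ?_
  obtain rfl := Finset.HasAntidiagonal.mem_antidiagonal.1 hq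
  by_cases hq2 : paramDeg q.2 = 0 ∧ q.2 0 < p
  · rw [coeff_eq_zero_of_X_pow_dvd hg hq2.1 hq2.2, mul_zero]
  · rw [hf q.1 ?_, zero_mul]
    obtain ⟨h1, h2⟩ := hd
    refine ⟨le_trans (by simp [erase_add]) h1, le_trans ?_ h2⟩
    simp only [paramDeg_add, coe_add, Pi.add_apply, Prod.Lex.toLex_le_toLex] at h2 ⊢
    omega

lemma pow_sub_pow_mem_vanishingIdeal_cone {e : Monom m} {r : ℕ} {f g : Series m}
    (h : f - g ∈ vanishingIdeal (cone e r)) (hf : PowerSeries.X ∣ restrictAxis 0 f)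
    (hg : PowerSeries.X ∣ restrictAxis 0 g) (n : ℕ) :
    f ^ n - g ^ n ∈ vanishingIdeal (cone e (r - (n - 1))) := by
  rw [← geom_sum₂_mul, mul_comm]
  refine mul_mem_vanishingIdeal_cone h ?_
  rw [map_sum]
  refine Finset.dvd_sum fun i hi => ?_
  rw [map_mul, map_pow, map_pow, show PowerSeries.X ^ (n - 1) = PowerSeries.X ^ i *
    PowerSeries.X ^ (n - 1 - i) by rw [← pow_add]; congr 1; have := Finset.mem_range.1 hi; omega]
  exact mul_dvd_mul (pow_dvd_pow_of_dvd hf i) (pow_dvd_pow_of_dvd hg _)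

end Cone

section Defect

lemma coeff_formalDx (f : Series m) (d : Monom m) :
    coeff d (formalDx f) = ((d 0 : ℕ) + 1 : ℂ) * coeff (d + single 0 1) f := rfl

lemma formalDx_add (f g : Series m) : formalDx (f + g) = formalDx f + formalDx g := by
  ext d
  simp only [map_add, coeff_formalDx]
  ring

lemma formalDx_monomial (d : Monom m) (c : ℂ) :
    formalDx (monomial d c) = monomial (d - single 0 1) ((d 0 : ℂ) * c) := by
  ext e
  rw [coeff_formalDx, coeff_monomial, coeff_monomial]
  by_cases hd : d 0 = 0
  · have hne : e + single 0 1 ≠ d := fun h => by simpa [hd] using congr($h 0)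
    simp [hne, hd]
  · have hiff : e + single 0 1 = d ↔ e = d - single 0 1 := by
      constructor
      · rintro rfl; simp
      · rintro rfl
        ext i
        by_cases hi : i = 0
        · subst hi; simp; omega
        · simp [Ne.symm hi]
    by_cases he : e = d - single 0 1
    · rw [if_pos (hiff.2 he), if_pos he, he]
      simp only [coe_tsub, Pi.sub_apply, single_eq_same]
      push_cast [Nat.one_le_iff_ne_zero.2 hd]
      ring
    · rw [if_neg (mt hiff.1 he), if_neg he, mul_zero]

lemma restrictAxis_formalDx (f : Series m) :
    restrictAxis 0 (formalDx f) = PowerSeries.derivative ℂ (restrictAxis 0 f) := by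
  ext n
  rw [coeff_restrictAxis, coeff_formalDx, PowerSeries.coeff_derivative, coeff_restrictAxis,
    ← single_add]
  simp only [single_eq_same]
  ring

lemma coeff_restrictAxis_monomial_of_ne {d : Monom m} {n : ℕ} (hd : d ≠ single 0 n) (z : ℂ) :
    PowerSeries.coeff n (restrictAxis 0 (monomial d z)) = 0 := by
  rw [coeff_restrictAxis, coeff_monomial, if_neg (Ne.symm hd)]

variable {Xh φ : Series m} {u : PowerSeries ℂ} {a : ℂ}

lemma coeff_single_mul_of_restrictAxis_eq (hX : restrictAxis 0 Xh = PowerSeries.X ^ (k + 1) * u)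
    (W : Series m) :
    coeff (single 0 (k + 1)) (Xh * W)
      = PowerSeries.constantCoeff u * PowerSeries.constantCoeff (restrictAxis 0 W) := by
  have hshift := PowerSeries.coeff_X_pow_mul (u * restrictAxis 0 W) (k + 1) 0
  rw [zero_add] at hshift
  rw [← coeff_restrictAxis, map_mul, hX, mul_assoc, hshift,
    PowerSeries.coeff_zero_eq_constantCoeff_apply, map_mul]

lemma coeff_formalDx_monomial_mul (hX : restrictAxis 0 Xh = PowerSeries.X ^ (k + 1) * u)
    (d : Monom m) (z : ℂ) (W : Series m) :
    coeff (d + single 0 k) (formalDx (monomial d z) * (Xh * W))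
      = z * (d 0 * PowerSeries.constantCoeff u * PowerSeries.constantCoeff (restrictAxis 0 W)) := by
  rw [formalDx_monomial]
  by_cases hd : d 0 = 0
  · simp [hd]
  have he : d + single 0 k = (d - single 0 1) + single 0 (k + 1) := by
    ext i
    by_cases hi : i = 0
    · subst hi; simp; omega
    · simp [Ne.symm hi]
  rw [he, coeff_add_monomial_mul, coeff_single_mul_of_restrictAxis_eq hX]
  ring

noncomputable def defect (Xh φ : Series m) (y : Fin k → Series m) (μ : Series m) : Series m :=
  φ ^ (k + 1) + ∑ j, y j * φ ^ (j : ℕ) - formalDx φ * Xh * (1 + μ * φ ^ k)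

lemma coeff_defect_phi_add_monomial (hk : 1 ≤ k)
    (hX : restrictAxis 0 Xh = PowerSeries.X ^ (k + 1) * u)
    (hφ : PowerSeries.X ∣ restrictAxis 0 φ) (hφa : PowerSeries.coeff 1 (restrictAxis 0 φ) = a)
    {y : Fin k → Series m} (hy : ∀ j, restrictAxis 0 (y j) = 0) (μ : Series m) {d : Monom m}
    (hd0 : d ≠ 0) (hd1 : d ≠ single 0 1) (z : ℂ) :
    coeff (d + single 0 k) (defect Xh (φ + monomial d z) y μ)
      = coeff (d + single 0 k) (defect Xh φ y μ)
        + z * ((k + 1) * a ^ k - d 0 * PowerSeries.constantCoeff u) := by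
  set M := monomial d z
  set ψ := φ + M with hψ_def
  have hψ : PowerSeries.X ∣ restrictAxis 0 ψ := by
    rw [map_add]
    refine dvd_add hφ (PowerSeries.X_dvd_iff.2 ?_)
    rw [← PowerSeries.coeff_zero_eq_constantCoeff_apply]
    exact coeff_restrictAxis_monomial_of_ne (by simpa using hd0) z
  have hψa : PowerSeries.coeff 1 (restrictAxis 0 ψ) = a := by
    rw [map_add, map_add, hφa, coeff_restrictAxis_monomial_of_ne hd1, add_zero]
  -- `G` is kept opaque so that rewriting with `hpow` does not loop.
  obtain ⟨G, hG⟩ : ∃ G : ℕ → Series m,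
      G = fun n => ∑ i ∈ Finset.range n, ψ ^ i * φ ^ (n - 1 - i) := ⟨_, rfl⟩
  have hpow : ∀ n, ψ ^ n = φ ^ n + G n * M := fun n => by
    rw [hG, ← add_sub_cancel_left φ M, ← hψ_def, geom_sum₂_mul]
    ring
  have hsplit : defect Xh ψ y μ = defect Xh φ y μ
      + (G (k + 1) + (∑ j, y j * G j - formalDx φ * Xh * μ * G k)) * M
      - formalDx M * (Xh * (1 + μ * ψ ^ k)) := by
    have hDψ : formalDx ψ = formalDx φ + formalDx M := formalDx_add φ M
    simp only [defect, hDψ, hpow, mul_add, add_mul, sub_mul, Finset.sum_add_distrib,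
      Finset.sum_mul, ← mul_assoc]
    ring
  have hG : PowerSeries.coeff k (restrictAxis 0 (G (k + 1))) = (k + 1) * a ^ k := by
    simpa [hG] using PowerSeries.coeff_geom_sum₂_of_X_dvd hψ hφ hψa hφa k
  have hrest : PowerSeries.coeff k
      (restrictAxis 0 (∑ j, y j * G j - formalDx φ * Xh * μ * G k)) = 0 := by
    simp only [map_sub, map_sum, map_mul, hy, zero_mul, Finset.sum_const_zero, zero_sub, map_neg,
      neg_eq_zero, hX]
    refine (PowerSeries.X_pow_dvd_iff (n := k + 1)).1 ?_ k (by omega)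
    exact ⟨restrictAxis 0 (formalDx φ) * u * restrictAxis 0 μ * restrictAxis 0 (G k), by ring⟩
  have hunit : PowerSeries.constantCoeff (restrictAxis 0 (1 + μ * ψ ^ k)) = 1 := by
    simp only [map_add, map_one, map_mul, map_pow, PowerSeries.X_dvd_iff.1 hψ,
      zero_pow (by omega : k ≠ 0), mul_zero, add_zero]
  rw [hsplit, map_sub, map_add, add_comm d, coeff_add_mul_monomial, ← coeff_restrictAxis,
    add_comm (single 0 k), coeff_formalDx_monomial_mul hX, hunit, map_add, map_add, hG, hrest]
  ring

lemma coeff_defect_y_add_single (hφ : PowerSeries.X ∣ restrictAxis 0 φ)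
    (hφa : PowerSeries.coeff 1 (restrictAxis 0 φ) = a) (y : Fin k → Series m) (μ : Series m)
    (j : Fin k) (β : Monom m) (z : ℂ) :
    coeff (β + single 0 (j : ℕ)) (defect Xh φ (y + Pi.single j (monomial β z)) μ)
      = coeff (β + single 0 (j : ℕ)) (defect Xh φ y μ) + z * a ^ (j : ℕ) := by
  have hsplit : defect Xh φ (y + Pi.single j (monomial β z)) μ
      = defect Xh φ y μ + monomial β z * φ ^ (j : ℕ) := by
    simp only [defect, Pi.add_apply, add_mul, Finset.sum_add_distrib, Pi.single_apply, ite_mul,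
      zero_mul, Finset.sum_ite_eq', Finset.mem_univ, if_true]
    ring
  rw [hsplit, map_add, coeff_add_monomial_mul, ← coeff_restrictAxis, map_pow,
    PowerSeries.coeff_pow_of_X_dvd hφ, hφa]

lemma coeff_defect_mu_add_monomial (hX : restrictAxis 0 Xh = PowerSeries.X ^ (k + 1) * u)
    (hφ : PowerSeries.X ∣ restrictAxis 0 φ) (hφa : PowerSeries.coeff 1 (restrictAxis 0 φ) = a)
    (y : Fin k → Series m) (μ : Series m) (β : Monom m) (z : ℂ) :
    coeff (β + single 0 (2 * k + 1)) (defect Xh φ y (μ + monomial β z))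
      = coeff (β + single 0 (2 * k + 1)) (defect Xh φ y μ)
        - z * (a * PowerSeries.constantCoeff u * a ^ k) := by
  have hsplit : defect Xh φ y (μ + monomial β z)
      = defect Xh φ y μ - monomial β z * (formalDx φ * Xh * φ ^ k) := by
    simp only [defect]
    ring
  obtain ⟨f, hf⟩ := hφ
  have hf0 : PowerSeries.constantCoeff f = a := by
    rw [← hφa, hf, PowerSeries.coeff_succ_X_mul, PowerSeries.coeff_zero_eq_constantCoeff_apply]
  have hD0 : PowerSeries.constantCoeff (PowerSeries.derivative ℂ (restrictAxis 0 φ)) = a := by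
    rw [← PowerSeries.coeff_zero_eq_constantCoeff_apply, PowerSeries.coeff_derivative, hφa]
    simp
  have hres : restrictAxis 0 (formalDx φ * Xh * φ ^ k) = PowerSeries.X ^ (2 * k + 1)
      * (PowerSeries.derivative ℂ (restrictAxis 0 φ) * u * f ^ k) := by
    rw [map_mul, map_mul, map_pow, restrictAxis_formalDx, hX, hf]
    ring
  have hshift := PowerSeries.coeff_X_pow_mul
    (PowerSeries.derivative ℂ (restrictAxis 0 φ) * u * f ^ k) (2 * k + 1) 0
  rw [zero_add] at hshift
  rw [hsplit, map_sub, coeff_add_monomial_mul, ← coeff_restrictAxis, hres, hshift,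
    PowerSeries.coeff_zero_eq_constantCoeff_apply, map_mul, map_mul, map_pow, hD0, hf0]

lemma coeff_restrictAxis_defect_of_le (hk : 1 ≤ k)
    (hX : restrictAxis 0 Xh = PowerSeries.X ^ (k + 1) * u)
    (hφ : PowerSeries.X ∣ restrictAxis 0 φ) (hφa : PowerSeries.coeff 1 (restrictAxis 0 φ) = a)
    (ha : a ^ k = PowerSeries.constantCoeff u) {y : Fin k → Series m}
    (hy : ∀ j, restrictAxis 0 (y j) = 0) (μ : Series m) {n : ℕ} (hn : n ≤ k + 1) :
    PowerSeries.coeff n (restrictAxis 0 (defect Xh φ y μ)) = 0 := by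
  obtain ⟨f, hf⟩ := hφ
  have hf0 : PowerSeries.constantCoeff f = a := by
    rw [← hφa, hf, PowerSeries.coeff_succ_X_mul, PowerSeries.coeff_zero_eq_constantCoeff_apply]
  have hφ0 : PowerSeries.constantCoeff (restrictAxis 0 φ) = 0 := by
    rw [hf, map_mul, PowerSeries.constantCoeff_X, zero_mul]
  have hD0 : PowerSeries.constantCoeff (PowerSeries.derivative ℂ (restrictAxis 0 φ)) = a := by
    rw [← PowerSeries.coeff_zero_eq_constantCoeff_apply, PowerSeries.coeff_derivative, hφa]
    simp
  have hres : restrictAxis 0 (defect Xh φ y μ) = PowerSeries.X ^ (k + 1) * (f ^ (k + 1)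
      - PowerSeries.derivative ℂ (restrictAxis 0 φ) * u
        * (1 + restrictAxis 0 μ * restrictAxis 0 φ ^ k)) := by
    simp only [defect, map_sub, map_add, map_sum, map_mul, map_pow, map_one, hy, zero_mul,
      Finset.sum_const_zero, add_zero, restrictAxis_formalDx, hX]
    rw [hf]
    ring
  rw [hres, PowerSeries.coeff_X_pow_mul']
  split_ifs with h
  · rw [show n - (k + 1) = 0 by omega, PowerSeries.coeff_zero_eq_constantCoeff_apply]
    simp only [map_sub, map_mul, map_pow, map_add, map_one, hf0, hD0, hφ0,
      zero_pow (by omega : k ≠ 0), mul_zero, add_zero, mul_one, ← ha]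
    ring
  · rfl

end Defect

section Locality

variable {e : Monom m}

lemma formalDx_mem_vanishingIdeal_cone {r : ℕ} {f : Series m}
    (hf : f ∈ vanishingIdeal (cone e r)) : formalDx f ∈ vanishingIdeal (cone e (r + 1)) :=
  fun d hd => by
    rw [coeff_formalDx, hf _ (add_single_mem_cone_iff.2 (by rwa [add_comm 1 r])), mul_zero]

lemma defect_sub_defect (Xh φ φ' : Series m) (y y' : Fin k → Series m) (μ μ' : Series m) :
    defect Xh φ y μ - defect Xh φ' y' μ'
      = (φ ^ (k + 1) - φ' ^ (k + 1))
        + ∑ j, ((y j - y' j) * φ ^ (j : ℕ) + (φ ^ (j : ℕ) - φ' ^ (j : ℕ)) * y' j)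
        - (formalDx (φ - φ') * (Xh * (1 + μ * φ ^ k))
          + ((μ - μ') * φ ^ k + μ' * (φ ^ k - φ' ^ k)) * (formalDx φ' * Xh)) := by
  have hsum : ∑ j, y j * φ ^ (j : ℕ) - ∑ j, y' j * φ' ^ (j : ℕ)
      = ∑ j, ((y j - y' j) * φ ^ (j : ℕ) + (φ ^ (j : ℕ) - φ' ^ (j : ℕ)) * y' j) := by
    rw [← Finset.sum_sub_distrib]
    exact Finset.sum_congr rfl fun j _ => by ring
  have hD : formalDx (φ - φ') = formalDx φ - formalDx φ' := by
    rw [eq_sub_iff_add_eq, ← formalDx_add, sub_add_cancel]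
  rw [defect, defect, hD]
  linear_combination hsum

lemma defect_sub_defect_mem_vanishingIdeal_cone {Xh φ φ' μ μ' : Series m}
    {y y' : Fin k → Series m} (hX : PowerSeries.X ^ (k + 1) ∣ restrictAxis 0 Xh)
    (hφ : PowerSeries.X ∣ restrictAxis 0 φ) (hφ' : PowerSeries.X ∣ restrictAxis 0 φ')
    (hy' : ∀ j, restrictAxis 0 (y' j) = 0) (hφφ' : φ - φ' ∈ vanishingIdeal (cone e k))
    (hyy' : ∀ j : Fin k, y j - y' j ∈ vanishingIdeal (cone e j))
    (hμμ' : μ - μ' ∈ vanishingIdeal (cone e (2 * k + 1))) :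
    defect Xh φ y μ - defect Xh φ' y' μ' ∈ vanishingIdeal (cone e 0) := by
  have hmono : ∀ {r r'}, r ≤ r' → vanishingIdeal (cone e r) ≤ vanishingIdeal (cone e r') :=
    vanishingIdeal_cone_mono
  have hXpow : ∀ n, PowerSeries.X ^ n ∣ restrictAxis 0 (φ ^ n) := fun n => by
    rw [map_pow]
    exact pow_dvd_pow_of_dvd hφ n
  have hpow := pow_sub_pow_mem_vanishingIdeal_cone hφφ' hφ hφ'
  rw [defect_sub_defect]
  refine Ideal.sub_mem _ (Ideal.add_mem _ ?_ (Ideal.sum_mem _ fun j _ => Ideal.add_mem _ ?_ ?_))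
    (Ideal.add_mem _ ?_ ?_)
  · exact hmono (by omega) (hpow (k + 1))
  · exact hmono (by omega) (mul_mem_vanishingIdeal_cone (hyy' j) (hXpow j))
  · refine hmono (by omega) (mul_mem_vanishingIdeal_cone (p := k + 1) (hpow j) ?_)
    rw [hy']
    exact dvd_zero _
  · refine hmono (by omega) (mul_mem_vanishingIdeal_cone (p := k + 1)
      (formalDx_mem_vanishingIdeal_cone hφφ') ?_)
    rw [map_mul]
    exact dvd_mul_of_dvd_left hX _
  · have hW : (μ - μ') * φ ^ k + μ' * (φ ^ k - φ' ^ k) ∈ vanishingIdeal (cone e (k + 1)) :=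
      Ideal.add_mem _ (hmono (by omega) (mul_mem_vanishingIdeal_cone hμμ' (hXpow k)))
        (Ideal.mul_mem_left _ _ (hmono (by omega) (hpow k)))
    refine hmono (by omega) (mul_mem_vanishingIdeal_cone (p := k + 1) hW ?_)
    rw [map_mul]
    exact dvd_mul_of_dvd_right hX _

end Locality

section Unknowns

/-- `phi d`, `y j β` and `mu β` stand for the coefficients of the monomial `d` in `φ̂`, and of
`β` in `ŷ_j` and `μ̂`; those with `β 0 ≠ 0` do not occur and are pinned to zero. -/
inductive Unknown (k m : ℕ)
  | phi (d : Monom m)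
  | y (j : Fin k) (β : Monom m)
  | mu (β : Monom m)

noncomputable instance : DecidableEq (Unknown k m) := Classical.decEq _

noncomputable def eqnMonom : Unknown k m → Monom m
  | .phi d => d + single 0 k
  | .y j β => β + single 0 (j : ℕ)
  | .mu β => β + single 0 (2 * k + 1)

def IsPinned : Unknown k m → Prop
  | .phi d => d = 0 ∨ d = single 0 1 ∨ d 0 = k + 1
  | .y _ β => β 0 ≠ 0 ∨ β = 0
  | .mu β => β 0 ≠ 0

noncomputable instance (s : Unknown k m) : Decidable (IsPinned s) := Classical.dec _

noncomputable def pinnedValue (a : ℂ) : Unknown k m → ℂ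
  | .phi d => if d = single 0 1 then a else 0
  | _ => 0

def IsNormalized (a : ℂ) (A : Unknown k m → ℂ) : Prop :=
  ∀ s, IsPinned s → A s = pinnedValue a s

def phiOf (A : Unknown k m → ℂ) : Series m := fun d => A (.phi d)

noncomputable def yOf (A : Unknown k m → ℂ) (j : Fin k) : Series m :=
  fun d => if d 0 = 0 then A (.y j d) else 0

noncomputable def muOf (A : Unknown k m → ℂ) : Series m :=
  fun d => if d 0 = 0 then A (.mu d) else 0

noncomputable def defectOf (Xh : Series m) (A : Unknown k m → ℂ) : Series m :=
  defect Xh (phiOf A) (yOf A) (muOf A)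

lemma coeff_phiOf (A : Unknown k m → ℂ) (d : Monom m) : coeff d (phiOf A) = A (.phi d) := rfl

lemma coeff_yOf (A : Unknown k m → ℂ) (j : Fin k) (d : Monom m) :
    coeff d (yOf A j) = if d 0 = 0 then A (.y j d) else 0 := rfl

lemma coeff_muOf (A : Unknown k m → ℂ) (d : Monom m) :
    coeff d (muOf A) = if d 0 = 0 then A (.mu d) else 0 := rfl

section Normalized

variable {a : ℂ} {A : Unknown k m → ℂ}

lemma IsNormalized.phi_zero (hA : IsNormalized a A) : A (.phi 0) = 0 := by
  rw [hA (.phi 0) (Or.inl rfl), pinnedValue, if_neg (Ne.symm (by simp))]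

lemma IsNormalized.phi_single_one (hA : IsNormalized a A) : A (.phi (single 0 1)) = a := by
  rw [hA (.phi (single 0 1)) (Or.inr (Or.inl rfl)), pinnedValue, if_pos rfl]

lemma IsNormalized.y_zero (hA : IsNormalized a A) (j : Fin k) : A (.y j 0) = 0 :=
  hA (.y j 0) (Or.inr rfl)

lemma IsNormalized.update (hA : IsNormalized a A) {s : Unknown k m} (hs : ¬ IsPinned s)
    (z : ℂ) : IsNormalized a (Function.update A s z) := fun s' hs' => by
  rw [Function.update_of_ne (by rintro rfl; exact hs hs'), hA s' hs']

lemma IsNormalized.X_dvd_phiOf (hA : IsNormalized a A) :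
    PowerSeries.X ∣ restrictAxis 0 (phiOf A) := by
  rw [PowerSeries.X_dvd_iff, ← PowerSeries.coeff_zero_eq_constantCoeff_apply, coeff_restrictAxis,
    single_zero, coeff_phiOf, hA.phi_zero]

lemma IsNormalized.coeff_one_phiOf (hA : IsNormalized a A) :
    PowerSeries.coeff 1 (restrictAxis 0 (phiOf A)) = a := by
  rw [coeff_restrictAxis, coeff_phiOf, hA.phi_single_one]

lemma IsNormalized.restrictAxis_yOf (hA : IsNormalized a A) (j : Fin k) :
    restrictAxis 0 (yOf A j) = 0 := by
  ext n
  rw [coeff_restrictAxis, coeff_yOf, single_eq_same, map_zero (PowerSeries.coeff n)]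
  rcases n with _ | n
  · rw [if_pos rfl, single_zero, hA.y_zero]
  · rw [if_neg n.succ_ne_zero]

end Normalized

section Update

variable (A : Unknown k m → ℂ) (z : ℂ)

lemma phiOf_update_of_ne {s : Unknown k m} (hs : ∀ d, s ≠ .phi d) :
    phiOf (Function.update A s z) = phiOf A := by
  ext d
  rw [coeff_phiOf, coeff_phiOf, Function.update_of_ne (hs d).symm]

lemma yOf_update_of_ne {s : Unknown k m} (hs : ∀ j β, s ≠ .y j β) :
    yOf (Function.update A s z) = yOf A := by
  ext j d
  rw [coeff_yOf, coeff_yOf, Function.update_of_ne (hs j d).symm]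

lemma muOf_update_of_ne {s : Unknown k m} (hs : ∀ β, s ≠ .mu β) :
    muOf (Function.update A s z) = muOf A := by
  ext d
  rw [coeff_muOf, coeff_muOf, Function.update_of_ne (hs d).symm]

lemma phiOf_update_phi {d : Monom m} (hA : A (.phi d) = 0) :
    phiOf (Function.update A (.phi d) z) = phiOf A + monomial d z := by
  ext e
  rw [map_add, coeff_phiOf, coeff_phiOf, coeff_monomial]
  by_cases he : e = d
  · subst he
    simp [hA]
  · have hne : Unknown.phi (k := k) e ≠ .phi d := by simpa using he
    rw [Function.update_of_ne hne, if_neg he, add_zero]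

lemma yOf_update_y {j : Fin k} {β : Monom m} (hA : A (.y j β) = 0) (hβ : β 0 = 0) :
    yOf (Function.update A (.y j β) z) = yOf A + Pi.single j (monomial β z) := by
  ext i e
  rw [Pi.add_apply, map_add, coeff_yOf, coeff_yOf]
  by_cases hij : i = j
  · subst hij
    by_cases he : e = β
    · subst he
      simp [hβ, hA]
    · simp [coeff_monomial, he]
  · simp [hij]

lemma muOf_update_mu {β : Monom m} (hA : A (.mu β) = 0) (hβ : β 0 = 0) :
    muOf (Function.update A (.mu β) z) = muOf A + monomial β z := by
  ext e
  rw [map_add, coeff_muOf, coeff_muOf, coeff_monomial]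
  by_cases he : e = β
  · subst he
    simp [hβ, hA]
  · have hne : Unknown.mu (k := k) e ≠ .mu β := by simpa using he
    rw [Function.update_of_ne hne, if_neg he, add_zero]

end Update

end Unknowns

noncomputable def slope (a c : ℂ) : Unknown k m → ℂ
  | .phi d => (k + 1) * a ^ k - d 0 * c
  | .y j _ => a ^ (j : ℕ)
  | .mu _ => -(a * c * a ^ k)

section Solve

variable {Xh : Series m} {u : PowerSeries ℂ} {a : ℂ} {A : Unknown k m → ℂ}

lemma coeff_defectOf_update (hk : 1 ≤ k) (hX : restrictAxis 0 Xh = PowerSeries.X ^ (k + 1) * u)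
    (hA : IsNormalized a A) {s : Unknown k m} (hs : ¬ IsPinned s) (z : ℂ) :
    coeff (eqnMonom s) (defectOf Xh (Function.update A s z))
      = coeff (eqnMonom s) (defectOf Xh (Function.update A s 0))
        + z * slope a (PowerSeries.constantCoeff u) s := by
  set A₀ := Function.update A s 0
  have hA₀ : IsNormalized a A₀ := hA.update hs 0
  have hs₀ : A₀ s = 0 := Function.update_self s 0 A
  rw [show Function.update A s z = Function.update A₀ s z from (Function.update_idem _ _ _).symm]
  have hφ := hA₀.X_dvd_phiOf
  have hφa := hA₀.coeff_one_phiOf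
  cases s with
  | phi d =>
    obtain ⟨hd0, hd1, -⟩ : d ≠ 0 ∧ d ≠ single 0 1 ∧ d 0 ≠ k + 1 := by
      simpa [IsPinned, not_or] using hs
    rw [defectOf, defectOf, phiOf_update_phi _ _ hs₀, yOf_update_of_ne _ _ (by simp),
      muOf_update_of_ne _ _ (by simp)]
    exact coeff_defect_phi_add_monomial hk hX hφ hφa hA₀.restrictAxis_yOf _ hd0 hd1 z
  | y j β =>
    obtain ⟨hβ, -⟩ : β 0 = 0 ∧ β ≠ 0 := by simpa [IsPinned, not_or] using hs
    rw [defectOf, defectOf, yOf_update_y _ _ hs₀ hβ, phiOf_update_of_ne _ _ (by simp),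
      muOf_update_of_ne _ _ (by simp)]
    exact coeff_defect_y_add_single hφ hφa _ _ j β z
  | mu β =>
    have hβ : β 0 = 0 := by simpa [IsPinned] using hs
    rw [defectOf, defectOf, muOf_update_mu _ _ hs₀ hβ, phiOf_update_of_ne _ _ (by simp),
      yOf_update_of_ne _ _ (by simp), eqnMonom, coeff_defect_mu_add_monomial hX hφ hφa, slope]
    ring

lemma slope_ne_zero (hk : 1 ≤ k) {c : ℂ} (ha : a ^ k = c) (hc : c ≠ 0) {s : Unknown k m}
    (hs : ¬ IsPinned s) : slope a c s ≠ 0 := by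
  have ha0 : a ≠ 0 := by
    rintro rfl
    exact hc (by rw [← ha, zero_pow (by omega)])
  cases s with
  | phi d =>
    have hd : d 0 ≠ k + 1 := by simp_all [IsPinned]
    rw [slope, ha, ← sub_mul]
    refine mul_ne_zero (fun h => hd ?_) hc
    exact_mod_cast (sub_eq_zero.1 h).symm
  | y j β => exact pow_ne_zero _ ha0
  | mu β => exact neg_ne_zero.2 (mul_ne_zero (mul_ne_zero ha0 hc) (pow_ne_zero _ ha0))

noncomputable def solveAt (Xh : Series m) (a c : ℂ) (A : Unknown k m → ℂ) (s : Unknown k m) : ℂ :=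
  -coeff (eqnMonom s) (defectOf Xh (Function.update A s 0)) / slope a c s

lemma coeff_defectOf_update_solveAt (hk : 1 ≤ k)
    (hX : restrictAxis 0 Xh = PowerSeries.X ^ (k + 1) * u) (ha : a ^ k = PowerSeries.constantCoeff u)
    (hu : PowerSeries.constantCoeff u ≠ 0) (hA : IsNormalized a A) {s : Unknown k m}
    (hs : ¬ IsPinned s) :
    coeff (eqnMonom s)
      (defectOf Xh (Function.update A s (solveAt Xh a (PowerSeries.constantCoeff u) A s))) = 0 := by
  rw [coeff_defectOf_update hk hX hA hs, solveAt,
    div_mul_cancel₀ _ (slope_ne_zero hk ha hu hs), add_neg_cancel]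

end Solve

lemma coeff_defectOf_eq_of_eqOn_cone {Xh : Series m}
    (hX : PowerSeries.X ^ (k + 1) ∣ restrictAxis 0 Xh) {a : ℂ} {A B : Unknown k m → ℂ}
    (hA : IsNormalized a A) (hB : IsNormalized a B) {e : Monom m}
    (hAB : ∀ s, eqnMonom s ∈ cone e 0 → A s = B s) :
    coeff e (defectOf Xh A) = coeff e (defectOf Xh B) := by
  have hφ : phiOf A - phiOf B ∈ vanishingIdeal (cone e k) := fun d hd => by
    rw [map_sub, coeff_phiOf, coeff_phiOf, hAB (.phi d) (add_single_mem_cone_iff.2 hd), sub_self]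
  have hy : ∀ j : Fin k, yOf A j - yOf B j ∈ vanishingIdeal (cone e j) := fun j d hd => by
    rw [map_sub, coeff_yOf, coeff_yOf, hAB (.y j d) (add_single_mem_cone_iff.2 hd), sub_self]
  have hμ : muOf A - muOf B ∈ vanishingIdeal (cone e (2 * k + 1)) := fun d hd => by
    rw [map_sub, coeff_muOf, coeff_muOf, hAB (.mu d) (add_single_mem_cone_iff.2 hd), sub_self]
  rw [← sub_eq_zero, ← map_sub]
  exact defect_sub_defect_mem_vanishingIdeal_cone hX hA.X_dvd_phiOf hB.X_dvd_phiOf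
    hB.restrictAxis_yOf hφ hy hμ e (self_mem_cone e)

lemma eq_of_eqnMonom_eq {s t : Unknown k m} (hs : ¬ IsPinned s) (ht : ¬ IsPinned t)
    (h : eqnMonom s = eqnMonom t) : s = t := by
  have h0 := congr($h 0)
  cases s with
  | phi d =>
    cases t with
    | phi d' => exact congrArg _ (add_right_cancel h)
    | y j β => simp [eqnMonom, IsPinned] at h0 ht; omega
    | mu β => simp [eqnMonom, IsPinned] at h0 hs ht; omega
  | y j β =>
    cases t with
    | phi d => simp [eqnMonom, IsPinned] at h0 hs; omega
    | y j' β' =>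
      simp only [eqnMonom, IsPinned, not_or, not_not, coe_add, Pi.add_apply, single_eq_same]
        at h0 hs ht h
      obtain rfl : j = j' := Fin.ext (by omega)
      rw [add_right_cancel h]
    | mu β' => simp [eqnMonom, IsPinned] at h0 hs ht; omega
  | mu β =>
    cases t with
    | phi d => simp [eqnMonom, IsPinned] at h0 hs ht; omega
    | y j β' => simp [eqnMonom, IsPinned] at h0 hs ht; omega
    | mu β' => exact congrArg _ (add_right_cancel h)

lemma exists_eqnMonom_eq {e : Monom m} (he : ¬ (paramDeg e = 0 ∧ e 0 ≤ k + 1)) :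
    ∃ s : Unknown k m, ¬ IsPinned s ∧ eqnMonom s = e := by
  have hsplit : e.erase 0 + single 0 (e 0) = e := erase_add_single 0 e
  have herase : e.erase 0 = 0 → e 0 > k + 1 := fun h => by
    have : paramDeg e = 0 := by rw [paramDeg, h, map_zero]
    omega
  by_cases hlt : e 0 < k
  · refine ⟨.y ⟨e 0, hlt⟩ (e.erase 0), ?_, hsplit⟩
    simp only [IsPinned, erase_same, not_or, ne_eq, not_true_eq_false, not_false_eq_true, true_and]
    exact fun h => by have := herase h; omega
  by_cases hmu : e 0 = 2 * k + 1
  · exact ⟨.mu (e.erase 0), by simp [IsPinned], by rw [eqnMonom, ← hmu, hsplit]⟩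
  have hle : single 0 k ≤ e := by
    intro i
    by_cases hi : i = 0
    · subst hi; simp; omega
    · simp [Ne.symm hi]
  refine ⟨.phi (e - single 0 k), ?_, tsub_add_cancel_of_le hle⟩
  have hd0 : (e - single 0 k : Monom m) 0 = e 0 - k := by simp
  have hderase : (e - single 0 k : Monom m).erase 0 = e.erase 0 := by
    ext i
    by_cases hi : i = 0
    · simp [hi]
    · simp [erase_ne hi, Ne.symm hi]
  simp only [IsPinned, not_or]
  refine ⟨fun h => ?_, fun h => ?_, by omega⟩
  · have := herase (by rw [← hderase, h, erase_zero])
    rw [h] at hd0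
    simp at hd0
    omega
  · have := herase (by rw [← hderase, h, erase_single])
    rw [h] at hd0
    simp at hd0
    omega

noncomputable def eqnRank (s : Unknown k m) : ℕ ×ₗ ℕ :=
  toLex (paramDeg (eqnMonom s), eqnMonom s 0)

noncomputable def truncate (a : ℂ) (V : Unknown k m → ℂ) (s : Unknown k m) : Unknown k m → ℂ :=
  fun t => if IsPinned t then pinnedValue a t else if eqnRank t < eqnRank s then V t else 0

noncomputable def solution (Xh : Series m) (a c : ℂ) : Unknown k m → ℂ :=
  (InvImage.wf eqnRank wellFounded_lt).fix fun s V =>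
    if IsPinned s then pinnedValue a s
    else solveAt Xh a c (fun t => if IsPinned t then pinnedValue a t
      else if h : eqnRank t < eqnRank s then V t h else 0) s

section Solution

variable (Xh : Series m) (a c : ℂ)

lemma solution_eq (s : Unknown k m) :
    solution Xh a c s = if IsPinned s then pinnedValue a s
      else solveAt Xh a c (truncate a (solution Xh a c) s) s := by
  rw [solution, WellFounded.fix_eq]
  rfl

lemma isNormalized_truncate (V : Unknown k m → ℂ) (s : Unknown k m) :
    IsNormalized a (truncate a V s) := fun t ht => by
  rw [truncate, if_pos ht]

lemma isNormalized_solution : IsNormalized a (solution Xh a c : Unknown k m → ℂ) :=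
  fun s hs => by rw [solution_eq, if_pos hs]

lemma solution_eq_update_truncate {s : Unknown k m} (hs : ¬ IsPinned s) {t : Unknown k m}
    (ht : eqnMonom t ∈ cone (eqnMonom s) 0) :
    solution Xh a c t
      = Function.update (truncate a (solution Xh a c) s) s (solution Xh a c s) t := by
  by_cases hts : t = s
  · rw [hts, Function.update_self]
  rw [Function.update_of_ne hts, truncate]
  by_cases htp : IsPinned t
  · rw [if_pos htp, isNormalized_solution Xh a c t htp]
  rw [if_neg htp, if_pos]
  refine lt_of_le_of_ne ((Prod.Lex.toLex_mono (Prod.mk_le_mk.2 ⟨le_rfl, ?_⟩)).trans ht.2)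
    fun h => hts (eq_of_eqnMonom_eq htp hs (eq_of_mem_cone ht ?_ ?_))
  · simp
  · exact congr(($h).1)
  · exact congr(($h).2)

end Solution

lemma defectOf_solution_eq_zero {Xh : Series m} {u : PowerSeries ℂ} {a : ℂ} (hk : 1 ≤ k)
    (hX : restrictAxis 0 Xh = PowerSeries.X ^ (k + 1) * u) (ha : a ^ k = PowerSeries.constantCoeff u)
    (hu : PowerSeries.constantCoeff u ≠ 0) :
    defectOf Xh (solution Xh a (PowerSeries.constantCoeff u) : Unknown k m → ℂ) = 0 := by
  set V : Unknown k m → ℂ := solution Xh a (PowerSeries.constantCoeff u)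
  have hV : IsNormalized a V := isNormalized_solution Xh a _
  ext e
  rw [map_zero]
  by_cases he : paramDeg e = 0 ∧ e 0 ≤ k + 1
  · rw [paramDeg_eq_zero_iff.1 he.1, ← coeff_restrictAxis]
    exact coeff_restrictAxis_defect_of_le hk hX hV.X_dvd_phiOf hV.coeff_one_phiOf ha
      hV.restrictAxis_yOf _ he.2
  obtain ⟨s, hs, rfl⟩ := exists_eqnMonom_eq he
  have hT := isNormalized_truncate a V s
  rw [coeff_defectOf_eq_of_eqOn_cone (hX ▸ dvd_mul_right _ _) hV (hT.update hs (V s))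
    fun t ht => solution_eq_update_truncate Xh a _ hs ht]
  rw [show V s = solveAt Xh a _ (truncate a V s) s from (solution_eq Xh a _ s).trans (if_neg hs)]
  exact coeff_defectOf_update_solveAt hk hX ha hu hT hs

end Kostov

open Kostov in
/-- **Formal Kostov theorem.**
Let `k ≥ 1` and let `X̂ ∈ ℂ[[x, λ₁, …, λ_m]]` (with `x` the variable `X 0`) be a formal
power series whose restriction to `λ = 0` equals `x^{k+1} u(x)` with `u(0) ≠ 0`. Then there
are a formal series `φ̂` with zero constant term whose coefficient of `x` at `λ = 0` is
nonzero, and formal series `ŷ₀, …, ŷ_{k-1}, μ̂ ∈ ℂ[[λ]]` with `ŷ_j(0) = 0`, such that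
`(φ̂^{k+1} + ŷ_{k-1} φ̂^{k-1} + ⋯ + ŷ₀) · (1 + μ̂ φ̂^k)⁻¹ = (∂φ̂/∂x) · X̂`
in `ℂ[[x, λ]]` (the substitution of `φ̂` for `x` in the normal form being legitimate since
`φ̂` has zero constant term, and the inverse existing since `1 + μ̂ φ̂^k` has constant
term `1`). -/
theorem kostov_formal (k : ℕ) (hk : 1 ≤ k) (m : ℕ)
    (Xh : MvPowerSeries (Fin (m + 1)) ℂ)
    (u : PowerSeries ℂ) (hu : PowerSeries.constantCoeff u ≠ 0)
    (hX0 : ∀ n : ℕ, MvPowerSeries.coeff (Finsupp.single 0 n) Xh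
      = if k + 1 ≤ n then PowerSeries.coeff (n - (k + 1)) u else 0) :
    ∃ (φh : MvPowerSeries (Fin (m + 1)) ℂ) (yh : Fin k → MvPowerSeries (Fin (m + 1)) ℂ)
      (μh : MvPowerSeries (Fin (m + 1)) ℂ),
      MvPowerSeries.constantCoeff φh = 0 ∧
      MvPowerSeries.coeff (Finsupp.single 0 1) φh ≠ 0 ∧
      (∀ j, noXVar (yh j)) ∧ (∀ j, MvPowerSeries.constantCoeff (yh j) = 0) ∧
      noXVar μh ∧
      (φh ^ (k + 1) + ∑ j : Fin k, yh j * φh ^ (j : ℕ)) * (1 + μh * φh ^ k)⁻¹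
        = formalDx φh * Xh := by
  have hX : MvPowerSeries.restrictAxis 0 Xh = PowerSeries.X ^ (k + 1) * u := by
    ext n
    rw [MvPowerSeries.coeff_restrictAxis, hX0, PowerSeries.coeff_X_pow_mul']
  obtain ⟨a, ha⟩ := IsAlgClosed.exists_pow_nat_eq (PowerSeries.constantCoeff u) (n := k) (by omega)
  have ha0 : a ≠ 0 := by
    rintro rfl
    exact hu (by rw [← ha, zero_pow (by omega)])
  set V : Unknown k m → ℂ := solution Xh a (PowerSeries.constantCoeff u)
  have hV : IsNormalized a V := isNormalized_solution Xh a _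
  refine ⟨phiOf V, yOf V, muOf V, hV.phi_zero, by rw [coeff_phiOf, hV.phi_single_one]; exact ha0,
    fun j d hd => if_neg hd, fun j => hV.y_zero j, fun d hd => if_neg hd, ?_⟩
  have hunit : MvPowerSeries.constantCoeff (1 + muOf V * phiOf V ^ k) ≠ 0 := by
    rw [map_add, map_one, map_mul, map_pow, ← MvPowerSeries.coeff_zero_eq_constantCoeff_apply (phiOf V),
      coeff_phiOf, hV.phi_zero, zero_pow (by omega), mul_zero, add_zero]
    exact one_ne_zero
  have hdefect := defectOf_solution_eq_zero hk hX ha hu (m := m)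
  rw [defectOf, defect, sub_eq_zero] at hdefect
  rw [hdefect, mul_assoc, MvPowerSeries.mul_inv_cancel _ hunit, mul_one]
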